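/- Pigeonhole lemma for arc pairs on a cylinder: suppose a finite collection of arcs on the two boundary circles C₁, C₂ of a cylinder comes in pairs of equal length, the total length of all arcs equals ℓ(C₁) + ℓ(C₂), and ℓ(C₁) = ℓ(C₂). If one pair (A₁, A₂) has both arcs on C₁, then there exists a subcollection of pairs, each pair entirely on C₂, whose total length is at least ℓ(A₁) + ℓ(A₂). -/

import Mathlib

/-- `loc i` records where the pair `i` lies: `0` both arcs on `C₁`, `1` both on `C₂`,
`2` one arc on each circle. -/
theorem cylinder_arc_pigeonhole_general (ι : Type*) [Fintype ι]
    (len : ι → ℝ) (hlen : ∀ i, 0 ≤ len i) (loc : ι → Fin 3) (L : ℝ)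
    (hC1 : ∑ i ∈ Finset.univ.filter (fun i => loc i = 0), 2 * len i
         + ∑ i ∈ Finset.univ.filter (fun i => loc i = 2), len i = L)
    (hC2 : ∑ i ∈ Finset.univ.filter (fun i => loc i = 1), 2 * len i
         + ∑ i ∈ Finset.univ.filter (fun i => loc i = 2), len i = L)
    (i₀ : ι) (h0 : loc i₀ = 0) :
    ∃ P : Finset ι, (∀ i ∈ P, loc i = 1) ∧ 2 * len i₀ ≤ ∑ i ∈ P, 2 * len i := by
  refine ⟨Finset.univ.filter (fun i => loc i = 1), fun i hi => (Finset.mem_filter.mp hi).2, ?_⟩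
  -- Each cross pair puts one arc on each circle, so the pairs on `C₁` and those on `C₂`
  -- have the same total length.
  have balance : ∑ i ∈ Finset.univ.filter (fun i => loc i = 0), 2 * len i
      = ∑ i ∈ Finset.univ.filter (fun i => loc i = 1), 2 * len i := by linarith
  calc 2 * len i₀ ≤ ∑ i ∈ Finset.univ.filter (fun i => loc i = 0), 2 * len i :=
        Finset.single_le_sum (f := fun i => 2 * len i) (fun i _ => by linarith [hlen i])
          (Finset.mem_filter.mpr ⟨Finset.mem_univ _, h0⟩)
    _ = ∑ i ∈ Finset.univ.filter (fun i => loc i = 1), 2 * len i := balance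

/-- Pigeonhole lemma for arc pairs on a cylinder. Arcs come in pairs of equal length
`len i`; each pair lies either with both arcs on the boundary circle `C₁`
(`loc i = 0`), both on `C₂` (`loc i = 1`), or one on each (`loc i = 2`). The arcs
partition the two boundary circles, which have equal length `L`. If some pair `i₀`
has both arcs on `C₁`, then there is a subcollection of pairs entirely on `C₂` whose
total length is at least the length `2 * len i₀` of the pair `i₀`. -/
theorem cylinder_arc_pigeonhole (ι : Type*) [Fintype ι] [DecidableEq ι]
    (len : ι → ℝ) (hlen : ∀ i, 0 ≤ len i) (loc : ι → Fin 3) (L : ℝ)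
    (hC1 : ∑ i ∈ Finset.univ.filter (fun i => loc i = 0), 2 * len i
         + ∑ i ∈ Finset.univ.filter (fun i => loc i = 2), len i = L)
    (hC2 : ∑ i ∈ Finset.univ.filter (fun i => loc i = 1), 2 * len i
         + ∑ i ∈ Finset.univ.filter (fun i => loc i = 2), len i = L)
    (i₀ : ι) (h0 : loc i₀ = 0) :
    ∃ P : Finset ι, (∀ i ∈ P, loc i = 1) ∧ 2 * len i₀ ≤ ∑ i ∈ P, 2 * len i :=
  cylinder_arc_pigeonhole_general ι len hlen loc L hC1 hC2 i₀ h0
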